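/- For every shape parameter λ > 0 and every x > 0 with λx > φ(λx), the Mills ratio of the skew normal distribution satisfies the upper bound (1 - F_λ(x)) / f_λ(x) < x^{-1} (1 - φ(λx)/(λx))^{-1}. -/

import Mathlib

open Real MeasureTheory Filter Topology

/-- Standard normal density. -/
noncomputable def stdPhi (x : ℝ) : ℝ := (Real.sqrt (2 * Real.pi))⁻¹ * Real.exp (-(x ^ 2) / 2)

/-- Standard normal cdf. -/
noncomputable def stdCdf (x : ℝ) : ℝ := ∫ t in Set.Iic x, stdPhi t

/-- Skew normal density with shape parameter l. -/
noncomputable def snPdf (l x : ℝ) : ℝ := 2 * stdPhi x * stdCdf (l * x)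

/-- Skew normal cdf with shape parameter l. -/
noncomputable def snCdf (l x : ℝ) : ℝ := ∫ t in Set.Iic x, snPdf l t

/-- Gumbel extreme value distribution function. -/
noncomputable def gumbel (x : ℝ) : ℝ := Real.exp (-Real.exp (-x))

/-!
Write `f = snPdf l`, `A = 1 - snCdf l x`, and `φ`, `Φ` for `stdPhi`, `stdCdf`. Since
`f'(t) = -t f(t) + 2 l φ(t) φ(l t)`, integrating over `(x, ∞)` gives
`x A ≤ ∫ₓ^∞ t f(t) dt = f(x) + 2 l ∫ₓ^∞ φ(t) φ(l t) dt`, and as `φ(t) φ(l t)` is a Gaussian in `t`,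
the tail bound `∫ₓ^∞ exp(-c t²) dt ≤ exp(-c x²) / (2 c x)` bounds the last term by
`2 φ(x) q s` with `q = φ(l x) / (l x)` and `s = l² / (1 + l²)`. The same tail bound gives the
Mills inequality `Φ(l x) ≥ 1 - q`, and since `s < 1` this yields
`(Φ(l x) + q s) (1 - q) < Φ(l x)`, that is, `x A (1 - q) < 2 φ(x) Φ(l x) = f(x)`.
-/

open Set ProbabilityTheory

lemma stdPhi_eq_gaussianPDFReal : stdPhi = gaussianPDFReal 0 1 := by
  ext x; simp [stdPhi, gaussianPDFReal]

lemma stdPhi_eq_mul_exp (x : ℝ) : stdPhi x = (√(2 * π))⁻¹ * exp (-(1 / 2) * x ^ 2) := by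
  rw [stdPhi]; ring_nf

lemma stdPhi_pos (x : ℝ) : 0 < stdPhi x := by
  rw [stdPhi_eq_gaussianPDFReal]; exact gaussianPDFReal_pos _ _ _ one_ne_zero

lemma integrable_stdPhi : Integrable stdPhi := by
  rw [stdPhi_eq_gaussianPDFReal]; exact integrable_gaussianPDFReal _ _

lemma integral_stdPhi : ∫ t, stdPhi t = 1 := by
  rw [stdPhi_eq_gaussianPDFReal]; exact integral_gaussianPDFReal_eq_one _ one_ne_zero

lemma continuous_stdPhi : Continuous stdPhi := by
  unfold stdPhi; fun_prop

lemma stdPhi_neg (x : ℝ) : stdPhi (-x) = stdPhi x := by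
  simp [stdPhi]

lemma hasDerivAt_stdPhi (x : ℝ) : HasDerivAt stdPhi (-x * stdPhi x) x := by
  have h : HasDerivAt (fun u : ℝ => -(u ^ 2) / 2) (-x) x := by
    simpa using ((hasDerivAt_pow 2 x).neg.div_const 2).congr_deriv (by ring)
  exact (h.exp.const_mul (√(2 * π))⁻¹).congr_deriv (by unfold stdPhi; ring)

lemma integrable_mul_stdPhi : Integrable fun t => t * stdPhi t := by
  simp only [stdPhi_eq_mul_exp, mul_left_comm _ (√(2 * π))⁻¹]
  exact (integrable_mul_exp_neg_mul_sq (by norm_num)).const_mul _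

lemma stdPhi_mul_stdPhi_mul (l x : ℝ) :
    stdPhi x * stdPhi (l * x) = (2 * π)⁻¹ * exp (-((1 + l ^ 2) / 2) * x ^ 2) := by
  rw [stdPhi_eq_mul_exp, stdPhi_eq_mul_exp, mul_mul_mul_comm, ← mul_inv,
    Real.mul_self_sqrt (by positivity), ← Real.exp_add]
  ring_nf

lemma stdCdf_add_integral_Ioi (x : ℝ) : stdCdf x + ∫ t in Ioi x, stdPhi t = 1 := by
  rw [stdCdf, ← compl_Iic, integral_add_compl measurableSet_Iic integrable_stdPhi, integral_stdPhi]

lemma stdCdf_nonneg (x : ℝ) : 0 ≤ stdCdf x :=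
  setIntegral_nonneg measurableSet_Iic fun t _ => (stdPhi_pos t).le

lemma stdCdf_le_one (x : ℝ) : stdCdf x ≤ 1 := by
  have : 0 ≤ ∫ t in Ioi x, stdPhi t :=
    setIntegral_nonneg measurableSet_Ioi fun t _ => (stdPhi_pos t).le
  linarith [stdCdf_add_integral_Ioi x]

lemma hasDerivAt_stdCdf (x : ℝ) : HasDerivAt stdCdf (stdPhi x) x := by
  have hsplit : stdCdf = fun u => stdCdf 0 + ∫ t in (0 : ℝ)..u, stdPhi t := by
    ext u
    rw [stdCdf, stdCdf, ← intervalIntegral.integral_Iic_sub_Iic integrable_stdPhi.integrableOn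
      integrable_stdPhi.integrableOn]
    ring
  rw [hsplit]
  exact (intervalIntegral.integral_hasDerivAt_right integrable_stdPhi.intervalIntegrable
    (continuous_stdPhi.stronglyMeasurableAtFilter _ _) continuous_stdPhi.continuousAt).const_add _

lemma continuous_stdCdf : Continuous stdCdf :=
  continuous_iff_continuousAt.2 fun x => (hasDerivAt_stdCdf x).continuousAt

lemma stdCdf_neg (x : ℝ) : stdCdf (-x) = 1 - stdCdf x := by
  have h : stdCdf (-x) = ∫ t in Ioi x, stdPhi t := by
    rw [stdCdf, ← neg_neg x, ← integral_comp_neg_Iic, neg_neg]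
    simp only [stdPhi_neg]
  linarith [stdCdf_add_integral_Ioi x]

lemma integral_Ioi_mul_exp_neg_mul_sq {c : ℝ} (hc : 0 < c) (x : ℝ) :
    ∫ t in Ioi x, t * exp (-c * t ^ 2) = exp (-c * x ^ 2) / (2 * c) := by
  have hderiv (t : ℝ) :
      HasDerivAt (fun u => -exp (-c * u ^ 2) / (2 * c)) (t * exp (-c * t ^ 2)) t := by
    have h : HasDerivAt (fun u : ℝ => -c * u ^ 2) (-c * (2 * t)) t := by
      simpa using (hasDerivAt_pow 2 t).const_mul (-c)
    exact (h.exp.neg.div_const (2 * c)).congr_deriv (by field_simp)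
  have hlim : Tendsto (fun u => -exp (-c * u ^ 2) / (2 * c)) atTop (𝓝 0) := by
    have h : Tendsto (fun u : ℝ => -c * u ^ 2) atTop atBot :=
      (tendsto_pow_atTop two_ne_zero).const_mul_atTop_of_neg (neg_neg_of_pos hc)
    simpa using (tendsto_exp_atBot.comp h).neg.div_const (2 * c)
  rw [integral_Ioi_of_hasDerivAt_of_tendsto' (fun t _ => hderiv t)
    (integrable_mul_exp_neg_mul_sq hc).integrableOn hlim]
  ring

lemma integral_Ioi_exp_neg_mul_sq_le {c x : ℝ} (hc : 0 < c) (hx : 0 < x) :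
    ∫ t in Ioi x, exp (-c * t ^ 2) ≤ exp (-c * x ^ 2) / (2 * c * x) :=
  calc ∫ t in Ioi x, exp (-c * t ^ 2)
      ≤ ∫ t in Ioi x, x⁻¹ * (t * exp (-c * t ^ 2)) := by
        refine setIntegral_mono_on (integrable_exp_neg_mul_sq hc).integrableOn
          ((integrable_mul_exp_neg_mul_sq hc).integrableOn.const_mul _) measurableSet_Ioi
          fun t ht => ?_
        rw [← mul_assoc, inv_mul_eq_div]
        exact le_mul_of_one_le_left (exp_pos _).le ((one_le_div hx).2 (le_of_lt ht))
    _ = exp (-c * x ^ 2) / (2 * c * x) := by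
        rw [integral_const_mul, integral_Ioi_mul_exp_neg_mul_sq hc]
        field_simp

lemma one_sub_stdCdf_le {x : ℝ} (hx : 0 < x) : 1 - stdCdf x ≤ stdPhi x / x := by
  have htail : ∫ t in Ioi x, stdPhi t ≤ stdPhi x / x := by
    simp only [stdPhi_eq_mul_exp]
    rw [integral_const_mul, mul_div_assoc]
    refine mul_le_mul_of_nonneg_left ?_ (by positivity)
    exact (integral_Ioi_exp_neg_mul_sq_le (by norm_num) hx).trans_eq (by ring)
  linarith [stdCdf_add_integral_Ioi x]

lemma integral_Ioi_stdPhi_mul_stdPhi_mul_le (l : ℝ) {x : ℝ} (hx : 0 < x) :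
    ∫ t in Ioi x, stdPhi t * stdPhi (l * t) ≤ stdPhi x * stdPhi (l * x) / ((1 + l ^ 2) * x) := by
  simp only [stdPhi_mul_stdPhi_mul]
  rw [integral_const_mul, mul_div_assoc]
  refine mul_le_mul_of_nonneg_left ?_ (by positivity)
  exact (integral_Ioi_exp_neg_mul_sq_le (by positivity) hx).trans_eq (by ring)

lemma snPdf_nonneg (l x : ℝ) : 0 ≤ snPdf l x := by
  have := stdPhi_pos x; have := stdCdf_nonneg (l * x)
  unfold snPdf; positivity

lemma snPdf_le (l x : ℝ) : snPdf l x ≤ 2 * stdPhi x :=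
  mul_le_of_le_one_right (by linarith [stdPhi_pos x]) (stdCdf_le_one _)

lemma continuous_snPdf (l : ℝ) : Continuous (snPdf l) := by
  unfold snPdf
  have := continuous_stdPhi; have := continuous_stdCdf
  fun_prop

lemma integrable_snPdf (l : ℝ) : Integrable (snPdf l) :=
  (integrable_stdPhi.const_mul 2).mono' (continuous_snPdf l).aestronglyMeasurable
    (.of_forall fun x => by rw [norm_of_nonneg (snPdf_nonneg l x)]; exact snPdf_le l x)

lemma integrable_mul_snPdf (l : ℝ) : Integrable fun t => t * snPdf l t :=
  (integrable_mul_stdPhi.const_mul 2).mono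
    (continuous_id.mul (continuous_snPdf l)).aestronglyMeasurable
    (.of_forall fun t => by
      rw [norm_mul, norm_mul, norm_mul, norm_of_nonneg (snPdf_nonneg l t),
        norm_of_nonneg (stdPhi_pos t).le, Real.norm_two, mul_left_comm]
      exact mul_le_mul_of_nonneg_left (snPdf_le l t) (norm_nonneg t))

lemma snPdf_neg (l x : ℝ) : snPdf l (-x) = 2 * stdPhi x - snPdf l x := by
  rw [snPdf, snPdf, mul_neg, stdCdf_neg, stdPhi_neg]
  ring

lemma integral_snPdf (l : ℝ) : ∫ t, snPdf l t = 1 := by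
  have h := integral_neg_eq_self (snPdf l) volume
  simp only [snPdf_neg] at h
  rw [integral_sub (integrable_stdPhi.const_mul 2) (integrable_snPdf l), integral_const_mul,
    integral_stdPhi] at h
  linarith

lemma one_sub_snCdf (l x : ℝ) : 1 - snCdf l x = ∫ t in Ioi x, snPdf l t := by
  rw [← integral_snPdf l, snCdf, ← integral_add_compl measurableSet_Iic (integrable_snPdf l),
    compl_Iic, add_sub_cancel_left]

lemma hasDerivAt_snPdf (l x : ℝ) :
    HasDerivAt (snPdf l) (-x * snPdf l x + 2 * l * (stdPhi x * stdPhi (l * x))) x := by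
  have h := (hasDerivAt_stdCdf (l * x)).comp x ((hasDerivAt_id x).const_mul l)
  exact (((hasDerivAt_stdPhi x).const_mul 2).mul h).congr_deriv
    (by unfold snPdf; simp only [Function.comp_apply, mul_one]; ring)

lemma integral_Ioi_mul_snPdf (l x : ℝ) :
    ∫ t in Ioi x, t * snPdf l t
      = snPdf l x + 2 * l * ∫ t in Ioi x, stdPhi t * stdPhi (l * t) := by
  have hφφ : Integrable fun t => stdPhi t * stdPhi (l * t) := by
    simp only [stdPhi_mul_stdPhi_mul]
    exact (integrable_exp_neg_mul_sq (by positivity)).const_mul _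
  have hderiv : Integrable fun t => -t * snPdf l t + 2 * l * (stdPhi t * stdPhi (l * t)) := by
    refine ((integrable_mul_snPdf l).neg.add (hφφ.const_mul (2 * l))).congr (.of_forall fun t => ?_)
    simp
  have hlim := tendsto_zero_of_hasDerivAt_of_integrableOn_Ioi (a := x)
    (fun t _ => hasDerivAt_snPdf l t) hderiv.integrableOn (integrable_snPdf l).integrableOn
  have h := integral_Ioi_of_hasDerivAt_of_tendsto' (a := x) (fun t _ => hasDerivAt_snPdf l t)
    hderiv.integrableOn hlim
  simp only [neg_mul] at h
  rw [integral_add (f := fun t => -(t * snPdf l t)) (integrable_mul_snPdf l).integrableOn.neg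
      (hφφ.const_mul _).integrableOn,
    integral_neg, integral_const_mul] at h
  linarith

lemma mul_one_sub_snCdf_le {l x : ℝ} (hl : 0 ≤ l) (hx : 0 < x) :
    x * (1 - snCdf l x)
      ≤ snPdf l x + 2 * l * (stdPhi x * stdPhi (l * x) / ((1 + l ^ 2) * x)) :=
  calc x * (1 - snCdf l x) = ∫ t in Ioi x, x * snPdf l t := by
        rw [one_sub_snCdf, integral_const_mul]
    _ ≤ ∫ t in Ioi x, t * snPdf l t :=
        setIntegral_mono_on ((integrable_snPdf l).const_mul x).integrableOn
          (integrable_mul_snPdf l).integrableOn measurableSet_Ioi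
          fun t ht => mul_le_mul_of_nonneg_right (le_of_lt ht) (snPdf_nonneg l t)
    _ ≤ _ := by
        rw [integral_Ioi_mul_snPdf]
        gcongr
        exact integral_Ioi_stdPhi_mul_stdPhi_mul_le l hx

theorem skew_normal_mills_upper_pos (l : ℝ) (hl : 0 < l) (x : ℝ) (hx : 0 < x)
    (hphix : stdPhi (l * x) < l * x) :
    (1 - snCdf l x) / snPdf l x < x⁻¹ * (1 - stdPhi (l * x) / (l * x))⁻¹ := by
  have hy : 0 < l * x := mul_pos hl hx
  set q := stdPhi (l * x) / (l * x) with hq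
  set s := l ^ 2 / (1 + l ^ 2) with hs
  have hq0 : 0 < q := div_pos (stdPhi_pos _) hy
  have hq1 : q < 1 := (div_lt_one hy).2 hphix
  have hs1 : s < 1 := (div_lt_one (by positivity)).2 (by linarith)
  have hmills : 1 - q ≤ stdCdf (l * x) := by linarith [one_sub_stdCdf_le hy]
  have htail : x * (1 - snCdf l x) ≤ 2 * stdPhi x * (stdCdf (l * x) + q * s) := by
    refine (mul_one_sub_snCdf_le hl.le hx).trans_eq ?_
    rw [snPdf, hq, hs]
    field_simp
  have hkey : (stdCdf (l * x) + q * s) * (1 - q) < stdCdf (l * x) := by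
    nlinarith [mul_lt_mul_of_pos_left hs1 (by linarith : 0 < 1 - q)]
  have hφ : 0 < 2 * stdPhi x := by linarith [stdPhi_pos x]
  have hf : 0 < snPdf l x := mul_pos hφ (by linarith)
  rw [div_lt_iff₀ hf, ← mul_inv, inv_mul_eq_div, lt_div_iff₀ (mul_pos hx (by linarith))]
  calc (1 - snCdf l x) * (x * (1 - q)) = x * (1 - snCdf l x) * (1 - q) := by ring
    _ ≤ 2 * stdPhi x * (stdCdf (l * x) + q * s) * (1 - q) :=
        mul_le_mul_of_nonneg_right htail (by linarith)
    _ < 2 * stdPhi x * stdCdf (l * x) := by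
        rw [mul_assoc]; exact mul_lt_mul_of_pos_left hkey hφ
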